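/- arXiv:2501.14840 — 2 statements merged into one kernel-verified Lean document; each statement's English description precedes it below -/
import Mathlib

section
/- Let H be a symmetric d×d real matrix (d ≥ 2) with an orthonormal basis of eigenvectors v₁, …, v_d and eigenvalues λ₁ ≤ λ₂ ≤ ⋯ ≤ λ_d. Let α, β ∈ ℝ with α + β > 1, let Π₁ := v₁v₁ᵀ, and define 𝓗 := (1−α)·H + α·(I − Π₁)·H·(I − Π₁) − β·Π₁·H·Π₁. Then 𝓗 is positive definite (i.e., zᵀ𝓗z > 0 for every nonzero z ∈ ℝ^d) if and only if λ₁ < 0 < λ₂. -/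
open Matrix


private lemma sum_dotProduct' {n m : Type*} [Fintype n] [Fintype m] (f : m → n → ℝ)
    (w : n → ℝ) : (∑ i, f i) ⬝ᵥ w = ∑ i, f i ⬝ᵥ w := by
  simp only [dotProduct, Finset.sum_apply, Finset.sum_mul]
  rw [Finset.sum_comm]

private lemma dotProduct_sum' {n m : Type*} [Fintype n] [Fintype m] (w : n → ℝ)
    (f : m → n → ℝ) : w ⬝ᵥ (∑ i, f i) = ∑ i, w ⬝ᵥ f i := by
  simp only [dotProduct, Finset.sum_apply, Finset.mul_sum]
  rw [Finset.sum_comm]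

private lemma mulVec_sum' {n m : Type*} [Fintype n] [Fintype m]
    (M : Matrix n n ℝ) (f : m → n → ℝ) : M *ᵥ (∑ i, f i) = ∑ i, M *ᵥ f i := by
  simpa only [mulVecLin_apply] using map_sum M.mulVecLin f Finset.univ

/-- For a symmetric `d×d` matrix `H` (`d ≥ 2`) with orthonormal eigenbasis `v`
and ascending eigenvalues `lam`, and `α + β > 1`, the matrix
`M = (1-α)H + α(I-Π₁)H(I-Π₁) - βΠ₁HΠ₁` (with `Π₁ = v₁v₁ᵀ`) is positive definite
if and only if `λ₁ < 0 < λ₂`. -/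
theorem stmt_2 {d : ℕ} (hd : 2 ≤ d) (H : Matrix (Fin d) (Fin d) ℝ) (hH : H.IsSymm)
    (v : Fin d → (Fin d → ℝ)) (lam : Fin d → ℝ)
    (horth : ∀ i j, v i ⬝ᵥ v j = if i = j then 1 else 0)
    (heig : ∀ i, H.mulVec (v i) = lam i • v i)
    (hmono : Monotone lam)
    (α β : ℝ) (hab : α + β > 1) :
    let i₁ : Fin d := ⟨0, by omega⟩
    let i₂ : Fin d := ⟨1, by omega⟩
    let P₁ : Matrix (Fin d) (Fin d) ℝ := vecMulVec (v i₁) (v i₁)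
    let M : Matrix (Fin d) (Fin d) ℝ :=
      (1 - α) • H + α • ((1 - P₁) * H * (1 - P₁)) - β • (P₁ * H * P₁)
    (∀ z : Fin d → ℝ, z ≠ 0 → 0 < z ⬝ᵥ M.mulVec z) ↔ (lam i₁ < 0 ∧ 0 < lam i₂) := by
  intro i₁ i₂ P₁ M
  have hcoef : (1 : ℝ) - α - β < 0 := by linarith
  have hPmv : ∀ x, P₁.mulVec x = (v i₁ ⬝ᵥ x) • v i₁ := by
    intro x
    ext k
    simp only [P₁, mulVec, vecMulVec, of_apply, dotProduct, Pi.smul_apply, smul_eq_mul,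
      Finset.sum_mul]
    exact Finset.sum_congr rfl fun j _ => by ring
  set μ : Fin d → ℝ := fun i => if i = i₁ then (1 - α - β) * lam i₁ else lam i with hμ
  have hsub : ∀ x, (1 - P₁).mulVec x = x - P₁.mulVec x := by
    intro x; rw [sub_mulVec, one_mulVec]
  have hMv : ∀ i, M.mulVec (v i) = μ i • v i := by
    intro i
    by_cases hi : i = i₁
    · have hP : P₁.mulVec (v i₁) = v i₁ := by
        rw [hPmv, horth, if_pos rfl, one_smul]
      have h0 : (1 - P₁).mulVec (v i₁) = 0 := by rw [hsub, hP, sub_self]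
      have hmid : ((1 - P₁) * H * (1 - P₁)).mulVec (v i₁) = 0 := by
        rw [← mulVec_mulVec, h0, mulVec_zero]
      have hlast : (P₁ * H * P₁).mulVec (v i₁) = lam i₁ • v i₁ := by
        rw [← mulVec_mulVec, hP, ← mulVec_mulVec, heig, mulVec_smul, hP]
      rw [hi]
      simp only [M, sub_mulVec, add_mulVec, smul_mulVec, hmid, hlast, heig,
        smul_zero, add_zero, μ, if_pos rfl]
      rw [smul_smul, smul_smul, ← sub_smul]
      ring_nf
    · have hP : P₁.mulVec (v i) = 0 := by
        rw [hPmv, horth, if_neg (fun h => hi h.symm), zero_smul]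
      have h1 : (1 - P₁).mulVec (v i) = v i := by rw [hsub, hP, sub_zero]
      have hmid : ((1 - P₁) * H * (1 - P₁)).mulVec (v i) = lam i • v i := by
        rw [← mulVec_mulVec, h1, ← mulVec_mulVec, heig, mulVec_smul, hsub, hP, sub_zero]
      have hlast : (P₁ * H * P₁).mulVec (v i) = 0 := by
        rw [← mulVec_mulVec, hP, mulVec_zero]
      simp only [M, sub_mulVec, add_mulVec, smul_mulVec, hmid, hlast, heig,
        smul_zero, sub_zero, μ, if_neg hi]
      rw [smul_smul, smul_smul, ← add_smul]
      ring_nf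
  have hvne : ∀ i, v i ≠ 0 := by
    intro i h
    have := horth i i
    rw [h] at this
    simp [dotProduct] at this
  have hquad : ∀ i, v i ⬝ᵥ M.mulVec (v i) = μ i := by
    intro i
    rw [hMv, dotProduct_smul, horth, if_pos rfl, smul_eq_mul, mul_one]
  have hne : i₂ ≠ i₁ := by simp [i₁, i₂, Fin.ext_iff]
  constructor
  · intro hpd
    have h1 := hpd (v i₁) (hvne i₁)
    have h2 := hpd (v i₂) (hvne i₂)
    rw [hquad] at h1 h2
    have h1' : 0 < (1 - α - β) * lam i₁ := by simpa [hμ] using h1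
    have h2' : 0 < lam i₂ := by simpa [hμ, hne] using h2
    exact ⟨by nlinarith, h2'⟩
  · rintro ⟨hl1, hl2⟩ z hz
    have hμpos : ∀ i, 0 < μ i := by
      intro i
      by_cases hi : i = i₁
      · rw [hi]; simp only [μ, if_pos rfl]; nlinarith
      · simp only [μ, if_neg hi]
        have hle : i₂ ≤ i := by
          have : i.val ≠ 0 := fun h => hi (Fin.ext h)
          simp only [i₂, Fin.le_def]; omega
        exact lt_of_lt_of_le hl2 (hmono hle)
    have hli : LinearIndependent ℝ v := by
      rw [Fintype.linearIndependent_iff]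
      intro g hg j
      have h0 : (∑ i, g i • v i) ⬝ᵥ v j = 0 := by rw [hg]; simp
      rw [sum_dotProduct'] at h0
      simpa [smul_dotProduct, horth] using h0
    have hcard : Fintype.card (Fin d) = Module.finrank ℝ (Fin d → ℝ) := by simp
    haveI : Nonempty (Fin d) := ⟨i₁⟩
    let b := basisOfLinearIndependentOfCardEqFinrank hli hcard
    have hb : ∀ i, b i = v i := fun i =>
      coe_basisOfLinearIndependentOfCardEqFinrank hli hcard ▸ rfl
    set c : Fin d → ℝ := fun i => b.repr z i with hc
    have hzrepr : z = ∑ i, c i • v i := by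
      conv_lhs => rw [← b.sum_repr z]
      exact Finset.sum_congr rfl fun i _ => by rw [hb]
    have hMz : M.mulVec z = ∑ i, (c i * μ i) • v i := by
      rw [hzrepr, mulVec_sum']
      refine Finset.sum_congr rfl fun i _ => ?_
      rw [mulVec_smul, hMv, smul_smul]
    have key : z ⬝ᵥ M.mulVec z = ∑ i, μ i * (c i)^2 := by
      rw [hMz, hzrepr, sum_dotProduct']
      refine Finset.sum_congr rfl fun i _ => ?_
      rw [smul_dotProduct, dotProduct_sum']
      have hterm : ∀ j ∈ Finset.univ, v i ⬝ᵥ (c j * μ j) • v j =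
          if j = i then c i * μ i else 0 := by
        intro j _
        rw [dotProduct_smul, horth, smul_eq_mul]
        by_cases h : j = i
        · subst h; simp
        · rw [if_neg (fun hq => h hq.symm), mul_zero, if_neg h]
      rw [Finset.sum_congr rfl hterm, Finset.sum_ite_eq' Finset.univ i
        (fun _ => c i * μ i)]
      simp only [Finset.mem_univ, if_pos, smul_eq_mul]
      ring
    rw [key]
    have hcne : ∃ i, c i ≠ 0 := by
      by_contra h
      push_neg at h
      exact hz (by rw [hzrepr]; simp [h])
    obtain ⟨i0, hi0⟩ := hcne
    refine Finset.sum_pos' (fun i _ => mul_nonneg (hμpos i).le (sq_nonneg _)) ?_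
    exact ⟨i0, Finset.mem_univ i0, mul_pos (hμpos i0) (by positivity)⟩
end

section
/- Let g : ℝ^d → ℝ be convex, twice continuously differentiable, with g ≥ 0 everywhere and g(x) = 0 for some x ∈ ℝ^d. Let y′ ∈ ℝ^d, let y = x + t₀·(y′ − x) for some t₀ ∈ (0,1) (so y lies on the segment from x to y′), and suppose there are constants δ > 0 and λ̄ > 0 such that ‖y′ − y‖ ≥ δ/2 and, for every t ∈ [0,1] and every v ∈ ℝ^d, (∇²g(y + t(y′−y)))(v,v) ≥ λ̄·‖v‖². Then g(y′) − g(y) ≥ (δ·λ̄/4)·‖y′ − y‖. -/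
open scoped RealInnerProductSpace

/-- Let `g` be convex, C², nonnegative with `g(x) = 0`. If `y` lies strictly
between `x` and `y′` on the segment from `x` to `y′`, `‖y′ - y‖ ≥ δ/2`, and the Hessian of
`g` along the segment from `y` to `y′` is bounded below by `λ̄·‖v‖²`, then
`g(y′) - g(y) ≥ (δλ̄/4)·‖y′ - y‖`. -/
theorem stmt_9 {d : ℕ} (g : EuclideanSpace ℝ (Fin d) → ℝ)
    (hconv : ConvexOn ℝ Set.univ g) (hg : ContDiff ℝ 2 g)
    (hnonneg : ∀ z, 0 ≤ g z)
    (x : EuclideanSpace ℝ (Fin d)) (hx : g x = 0)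
    (y y' : EuclideanSpace ℝ (Fin d)) (t₀ : ℝ) (ht₀ : t₀ ∈ Set.Ioo (0 : ℝ) 1)
    (hy : y = x + t₀ • (y' - x))
    (δ lamBar : ℝ) (hδ : 0 < δ) (hlam : 0 < lamBar)
    (hfar : ‖y' - y‖ ≥ δ / 2)
    (hHess : ∀ t ∈ Set.Icc (0 : ℝ) 1, ∀ v : EuclideanSpace ℝ (Fin d),
      lamBar * ‖v‖ ^ 2 ≤ iteratedFDeriv ℝ 2 g (y + t • (y' - y)) ![v, v]) :
    g y' - g y ≥ (δ * lamBar / 4) * ‖y' - y‖ := by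
  obtain ⟨ht₀0, ht₀1⟩ := ht₀
  have hgd : Differentiable ℝ g := hg.differentiable (by norm_num)
  have hF : ContDiff ℝ 1 (fderiv ℝ g) := hg.fderiv_right (by norm_num)
  have hFd : Differentiable ℝ (fderiv ℝ g) := hF.differentiable (by norm_num)
  have hline : ∀ (p w : EuclideanSpace ℝ (Fin d)) (t : ℝ),
      HasDerivAt (fun s : ℝ => p + s • w) w t := by
    intro p w t
    simpa using ((hasDerivAt_id t).smul_const w).const_add p
  have hd1 : ∀ (p w : EuclideanSpace ℝ (Fin d)) (t : ℝ),
      HasDerivAt (fun s : ℝ => g (p + s • w)) (fderiv ℝ g (p + t • w) w) t := by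
    intro p w t
    exact (hgd (p + t • w)).hasFDerivAt.comp_hasDerivAt t (hline p w t)
  set v := y' - y with hv
  -- sign of directional derivative at y
  have hcomp : ConvexOn ℝ Set.univ (fun s : ℝ => g (x + s • (y' - x))) := by
    have h2 := hconv.comp_affineMap (AffineMap.lineMap x y' : ℝ →ᵃ[ℝ] _)
    rw [Set.preimage_univ] at h2
    have heq : (g ∘ ⇑(AffineMap.lineMap x y')) = fun s : ℝ => g (x + s • (y' - x)) := by
      funext s
      simp only [Function.comp_apply, AffineMap.lineMap_apply, vsub_eq_sub, vadd_eq_add]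
      rw [add_comm]
    rwa [heq] at h2
  have hderiv_t₀ : HasDerivAt (fun s : ℝ => g (x + s • (y' - x)))
      (fderiv ℝ g y (y' - x)) t₀ := by
    have := hd1 x (y' - x) t₀
    rwa [← hy] at this
  have hslope := hcomp.slope_le_of_hasDerivAt (Set.mem_univ 0) (Set.mem_univ t₀)
    ht₀0 hderiv_t₀
  have hw : 0 ≤ fderiv ℝ g y (y' - x) := by
    refine le_trans ?_ hslope
    rw [slope_def_field]
    simp only [zero_smul, add_zero, hx, sub_zero]
    rw [← hy]
    exact div_nonneg (hnonneg y) ht₀0.le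
  have hv' : v = (1 - t₀) • (y' - x) := by
    rw [hv, hy]; module
  have hkey : 0 ≤ fderiv ℝ g y v := by
    rw [hv', map_smul, smul_eq_mul]
    exact mul_nonneg (by linarith) hw
  set c : ℝ := lamBar * ‖v‖ ^ 2 with hc
  have hcnn : 0 ≤ c := by positivity
  set φ' : ℝ → ℝ := fun t => fderiv ℝ g (y + t • v) v with hφ'
  have hφ'deriv : ∀ t : ℝ,
      HasDerivAt φ' (fderiv ℝ (fderiv ℝ g) (y + t • v) v v) t := by
    intro t
    have h1 : HasDerivAt (fun s : ℝ => fderiv ℝ g (y + s • v))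
        (fderiv ℝ (fderiv ℝ g) (y + t • v) v) t :=
      (hFd (y + t • v)).hasFDerivAt.comp_hasDerivAt t (hline y v t)
    have h2 := (ContinuousLinearMap.apply ℝ ℝ v).hasFDerivAt.comp_hasDerivAt t h1
    exact h2
  have hHess' : ∀ t ∈ Set.Icc (0 : ℝ) 1, c ≤ fderiv ℝ (fderiv ℝ g) (y + t • v) v v := by
    intro t ht
    have := hHess t ht v
    rw [iteratedFDeriv_two_apply] at this
    simpa using this
  set ψ' : ℝ → ℝ := fun t => φ' t - c * t with hψ'
  have hψ'deriv : ∀ t : ℝ,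
      HasDerivAt ψ' (fderiv ℝ (fderiv ℝ g) (y + t • v) v v - c) t := by
    intro t
    have h2 : HasDerivAt (fun s : ℝ => c * s) c t := by
      simpa using (hasDerivAt_id t).const_mul c
    exact (hφ'deriv t).sub h2
  have hψ'mono : MonotoneOn ψ' (Set.Icc (0 : ℝ) 1) := by
    apply monotoneOn_of_deriv_nonneg (convex_Icc 0 1)
    · exact fun t _ => (hψ'deriv t).differentiableAt.continuousAt.continuousWithinAt
    · exact fun t _ => (hψ'deriv t).differentiableAt.differentiableWithinAt
    · intro t ht
      rw [interior_Icc] at ht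
      rw [(hψ'deriv t).deriv]
      have := hHess' t ⟨ht.1.le, ht.2.le⟩
      linarith
  have hψ'0 : 0 ≤ ψ' 0 := by
    simp only [hψ', hφ', zero_smul, add_zero, mul_zero, sub_zero]
    exact hkey
  have hψ'nonneg : ∀ t ∈ Set.Icc (0 : ℝ) 1, 0 ≤ ψ' t := by
    intro t ht
    exact le_trans hψ'0 (hψ'mono (by constructor <;> norm_num) ht ht.1)
  set ψ : ℝ → ℝ := fun t => g (y + t • v) - c * (t ^ 2 / 2) with hψ
  have hψderiv : ∀ t : ℝ, HasDerivAt ψ (ψ' t) t := by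
    intro t
    have h2 : HasDerivAt (fun s : ℝ => c * (s ^ 2 / 2)) (c * t) t := by
      have := ((hasDerivAt_pow 2 t).div_const 2).const_mul c
      exact this.congr_deriv (by norm_num)
    exact (hd1 y v t).sub h2
  have hψmono : MonotoneOn ψ (Set.Icc (0 : ℝ) 1) := by
    apply monotoneOn_of_deriv_nonneg (convex_Icc 0 1)
    · exact fun t _ => (hψderiv t).differentiableAt.continuousAt.continuousWithinAt
    · exact fun t _ => (hψderiv t).differentiableAt.differentiableWithinAt
    · intro t ht
      rw [interior_Icc] at ht
      rw [(hψderiv t).deriv]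
      exact hψ'nonneg t ⟨ht.1.le, ht.2.le⟩
  have h01 := hψmono (by constructor <;> norm_num) (by constructor <;> norm_num)
    (by norm_num : (0:ℝ) ≤ 1)
  have hgy' : y + v = y' := by rw [hv]; abel
  have hfinal : g y + c / 2 ≤ g y' := by
    have e0 : ψ 0 = g y := by norm_num [hψ]
    have e1 : ψ 1 = g y' - c / 2 := by
      norm_num [hψ, hgy']
      ring
    rw [e0, e1] at h01
    linarith
  have hnv : δ / 2 * ‖v‖ ≤ ‖v‖ ^ 2 := by nlinarith [norm_nonneg v, hδ]
  have : lamBar * (δ / 2 * ‖v‖) ≤ c := by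
    rw [hc]
    exact mul_le_mul_of_nonneg_left hnv hlam.le
  rw [ge_iff_le]
  linarith [hfinal, this]
end
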